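/- If in going from bundle B1 to bundle B2 (with B1 ⊑_f B2 and each agent extending at most one strand by at most one node), then any causal path (along → or ⇒ edges) in B2 contains at most two 'new' nodes (nodes not of the form ⟨f(s),i⟩ for some ⟨s,i⟩ ∈ B1), and all new nodes on the path occur after all old nodes. -/

import Mathlib

namespace StrandPaper

/-- A strand space over a message set `M`: a type of strands, each with a trace,
a finite sequence of signed terms.  A signed term `(true, u)` is `+u` (send) and
`(false, u)` is `-u` (receive). -/
structure StrandSpace (M : Type) where
  Strand : Type
  tr : Strand → List (Bool × M)

namespace StrandSpace

variable {M α : Type}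

/-- Nodes are pairs of a strand and a (1-based) index. -/
abbrev Node (S : StrandSpace M) : Type := S.Strand × ℕ

/-- The signed term at a node (if the index is valid). -/
def term (S : StrandSpace M) (n : S.Node) : Option (Bool × M) := (S.tr n.1)[n.2 - 1]?

def IsNode (S : StrandSpace M) (n : S.Node) : Prop := 1 ≤ n.2 ∧ n.2 ≤ (S.tr n.1).length

/-- `n1 → n2`: `term n1 = +u` and `term n2 = -u`. -/
def SendsTo (S : StrandSpace M) (n1 n2 : S.Node) : Prop :=
  ∃ u, S.term n1 = some (true, u) ∧ S.term n2 = some (false, u)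

/-- `n1 ⇒ n2`: consecutive nodes of the same strand. -/
def SuccEdge (S : StrandSpace M) (n1 n2 : S.Node) : Prop :=
  n2.1 = n1.1 ∧ n2.2 = n1.2 + 1 ∧ S.IsNode n1 ∧ S.IsNode n2

/-- A (possibly infinite) bundle: a subgraph of `(N, → ∪ ⇒)` satisfying B2–B4:
every negative node has a unique incoming `→` edge, `⇒`-downward closure and
acyclicity. -/
structure Bundle (S : StrandSpace M) where
  nodes : Set S.Node
  comm : S.Node → S.Node → Prop
  nodes_valid : ∀ n ∈ nodes, S.IsNode n
  comm_mem : ∀ n1 n2, comm n1 n2 → n1 ∈ nodes ∧ n2 ∈ nodes ∧ S.SendsTo n1 n2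
  recv_unique : ∀ n2 ∈ nodes, ∀ u, S.term n2 = some (false, u) → ∃! n1, comm n1 n2
  succ_closed : ∀ n1 n2, S.SuccEdge n1 n2 → n2 ∈ nodes → n1 ∈ nodes
  acyclic : ∀ n, ¬ Relation.TransGen
      (fun m1 m2 => comm m1 m2 ∨ (S.SuccEdge m1 m2 ∧ m1 ∈ nodes ∧ m2 ∈ nodes)) n n

variable {S : StrandSpace M}

/-- The causal edges (`→` or `⇒`) of a bundle. -/
def Bundle.edge (B : S.Bundle) (n1 n2 : S.Node) : Prop :=
  B.comm n1 n2 ∨ (S.SuccEdge n1 n2 ∧ n1 ∈ B.nodes ∧ n2 ∈ B.nodes)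

/-- A causal path in a bundle. -/
def Bundle.CausalPath (B : S.Bundle) (l : List S.Node) : Prop :=
  l.Chain' B.edge ∧ ∀ n ∈ l, n ∈ B.nodes

/-- The height of the bundle is at most `k`: every causal path has at most `k+1` nodes
(i.e. length at most `k`). -/
def Bundle.HeightLE (B : S.Bundle) (k : ℕ) : Prop :=
  ∀ l, B.CausalPath l → l.length ≤ k + 1

def Bundle.FiniteHeight (B : S.Bundle) : Prop := ∃ k, B.HeightLE k

noncomputable def Bundle.height (B : S.Bundle) : ℕ := sInf {k | B.HeightLE k}

/-- The height of a strand in a bundle: the largest `i` with `⟨s,i⟩ ∈ B` (0 if none). -/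
noncomputable def Bundle.strandHeight (B : S.Bundle) (s : S.Strand) : ℕ :=
  sSup {i | (s, i) ∈ B.nodes}

/-- The empty bundle. -/
def emptyBundle (S : StrandSpace M) : S.Bundle where
  nodes := ∅
  comm := fun _ _ => False
  nodes_valid := fun n hn => absurd hn (Set.notMem_empty n)
  comm_mem := fun _ _ h => h.elim
  recv_unique := fun n hn => absurd hn (Set.notMem_empty n)
  succ_closed := fun _ n2 _ h => absurd h (Set.notMem_empty n2)
  acyclic := by
    intro n h
    cases h with
    | single h1 => rcases h1 with h1 | ⟨_, h3, _⟩
                   · exact h1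
                   · exact h3
    | tail _ h1 => rcases h1 with h1 | ⟨_, h3, _⟩
                   · exact h1
                   · exact h3

/-- `B1 ⊑_f B2`: `f` maps each strand prefix in `B1` into `B2`, preserving terms
and `→` edges. -/
def Embeds (f : S.Strand ≃ S.Strand) (B1 B2 : S.Bundle) : Prop :=
  (∀ s i, (s, i) ∈ B1.nodes → (f s, i) ∈ B2.nodes ∧ S.term (s, i) = S.term (f s, i)) ∧
  (∀ s i s' j, B1.comm (s, i) (s', j) → B2.comm (f s, i) (f s', j))

/-- `B1 ↦ B2` via the agent-respecting bijection `f`: `B1 ⊑_f B2` and, for each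
agent, at most one of its strands is extended, by at most (exactly) one node. -/
def StepVia (A : S.Strand → α) (f : S.Strand ≃ S.Strand) (B1 B2 : S.Bundle) : Prop :=
  (∀ s, A (f s) = A s) ∧ Embeds f B1 B2 ∧
  ∀ s s', A s = A s' →
    B2.strandHeight (f s) ≠ B1.strandHeight s →
    B2.strandHeight (f s') ≠ B1.strandHeight s' →
    s = s' ∧ B2.strandHeight (f s) = B1.strandHeight s + 1

/-- `B1 ↦ B2`. -/
def Step (A : S.Strand → α) (B1 B2 : S.Bundle) : Prop := ∃ f, StepVia A f B1 B2

/-- A chain `B_0 ↦ B_1 ↦ ⋯` starting from the empty bundle. -/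
structure Chain (A : S.Strand → α) where
  B : ℕ → S.Bundle
  init : B 0 = emptyBundle S
  step : ∀ k, Step A (B k) (B (k + 1))

/-- The event (if any) performed by agent `a` in the step `B1 ↦ B2`:
the term of the single new node on a strand of `a`. -/
noncomputable def stepEvent (A : S.Strand → α) (B1 B2 : S.Bundle) (a : α) :
    Option (Bool × M) := by
  classical
  exact if h : ∃ p : (S.Strand ≃ S.Strand) × S.Strand,
      StepVia A p.1 B1 B2 ∧ A p.2 = a ∧
      B2.strandHeight (p.1 p.2) = B1.strandHeight p.2 + 1 then
    S.term (h.choose.1 h.choose.2, B2.strandHeight (h.choose.1 h.choose.2))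
  else none

/-- The history of agent `a` at time `m` along a chain. -/
noncomputable def Chain.hist {A : S.Strand → α} (C : Chain (S := S) A) (a : α) :
    ℕ → List (Bool × M)
  | 0 => []
  | m + 1 => C.hist a m ++ (stepEvent A (C.B m) (C.B (m + 1)) a).toList

end StrandSpace

/-- A run: a local state (history of events) for each agent at each time.
`(true, u)` is `sent(u)` and `(false, u)` is `recv(u)`. -/
def Run (α M : Type) := ℕ → α → List (Bool × M)

variable {M α : Type}

/-- MP1–MP3 with respect to generating history sets `V`. -/
def MP (V : α → Set (List (Bool × M))) (r : Run α M) : Prop :=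
  (∀ a m, r m a ∈ V a) ∧
  (∀ a m u, (false, u) ∈ r m a → ∃ b, (true, u) ∈ r m b) ∧
  (∀ a, r 0 a = []) ∧
  (∀ a m, r (m + 1) a = r m a ∨ ∃ e, r (m + 1) a = r m a ++ [e])

/-- The strand system generated by history sets `V`: all runs satisfying MP1–3. -/
def generated (V : α → Set (List (Bool × M))) : Set (Run α M) := {r | MP V r}

def IsStrandSystem (R : Set (Run α M)) : Prop :=
  ∃ V : α → Set (List (Bool × M)), R = generated V

/-- The run associated with a chain. -/
noncomputable def StrandSpace.Chain.run {S : StrandSpace M} {A : S.Strand → α}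
    (C : StrandSpace.Chain (S := S) A) : Run α M := fun m a => C.hist a m

/-- `R(Σ, A, A)`: the translation of the strand space `S` under agent assignment `A`. -/
def systemOf (S : StrandSpace M) (A : S.Strand → α) : Set (Run α M) :=
  {r | ∃ C : StrandSpace.Chain (S := S) A, C.run = r}

end StrandPaper

open StrandPaper StrandPaper.StrandSpace

/-!
A node of `B2` that is not the `f`-image of a node of `B1` can only be the single node added on
top of its strand. Hence a `⇒` edge never leaves a new node, and a `→` edge out of a new node
ends in a new node: an old receive node already has its unique sender among the old nodes. That
target is a receive node on top of its strand, so no edge leaves it at all. Along a causal path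
the new nodes therefore form a suffix of length at most two.
-/

namespace List

variable {α : Type*} {R : α → α → Prop} {p : α → Prop} {l : List α}

theorem IsChain.exists_eq_append_of_imp_not (hl : l.IsChain R)
    (hR : ∀ ⦃a b⦄, R a b → ¬ p a → ¬ p b) :
    ∃ l₁ l₂, l = l₁ ++ l₂ ∧ (∀ x ∈ l₁, p x) ∧ (∀ x ∈ l₂, ¬ p x) ∧ l₂.IsChain R := by
  classical
  have hsuffix : (l.dropWhile (p ·)).IsChain R := hl.suffix (dropWhile_suffix _)
  refine ⟨l.takeWhile (p ·), l.dropWhile (p ·), takeWhile_append_dropWhile.symm,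
    fun x hx => by simpa using mem_takeWhile_imp hx, ?_, hsuffix⟩
  exact hsuffix.induction _ _ hR fun hne => by simpa using head_dropWhile_not (p ·) hne

theorem IsChain.length_le_two (hl : l.IsChain R) (h : ∀ a ∈ l, ∀ b c, R a b → ¬ R b c) :
    l.length ≤ 2 := by
  rcases l with _ | ⟨a, _ | ⟨b, _ | ⟨c, t⟩⟩⟩
  · simp
  · simp
  · simp
  · simp only [isChain_cons_cons] at hl
    exact absurd hl.2.1 (h a mem_cons_self b c hl.1)

end List

namespace StrandPaper.StrandSpace

variable {M : Type} {S : StrandSpace M}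

def IsOld (f : S.Strand ≃ S.Strand) (B1 : S.Bundle) (n : S.Node) : Prop :=
  ∃ s i, n = (f s, i) ∧ (s, i) ∈ B1.nodes

namespace Bundle

theorem bddAbove_strand (B : S.Bundle) (s : S.Strand) : BddAbove {i | (s, i) ∈ B.nodes} :=
  ⟨(S.tr s).length, fun _ hi => (B.nodes_valid _ hi).2⟩

variable {B : S.Bundle} {s : S.Strand} {i j : ℕ}

theorem le_strandHeight (h : (s, i) ∈ B.nodes) : i ≤ B.strandHeight s :=
  le_csSup (B.bddAbove_strand s) h

theorem mem_of_le_of_mem (hj : 1 ≤ j) (hji : j ≤ i) (hi : (s, i) ∈ B.nodes) :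
    (s, j) ∈ B.nodes := by
  induction i, hji using Nat.le_induction with
  | base => exact hi
  | succ i hji ih =>
    have hlen : i + 1 ≤ (S.tr s).length := (B.nodes_valid _ hi).2
    have hnode : S.IsNode (s, i) := ⟨by dsimp only; omega, by dsimp only; omega⟩
    exact ih (B.succ_closed (s, i) (s, i + 1) ⟨rfl, rfl, hnode, B.nodes_valid _ hi⟩ hi)

theorem mem_of_le_strandHeight (hj : 1 ≤ j) (hjs : j ≤ B.strandHeight s) :
    (s, j) ∈ B.nodes := by
  have hne : {i | (s, i) ∈ B.nodes}.Nonempty := by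
    by_contra hempty
    rw [Set.not_nonempty_iff_eq_empty] at hempty
    simp only [strandHeight, hempty, csSup_empty, bot_eq_zero'] at hjs
    omega
  exact mem_of_le_of_mem hj hjs (Nat.sSup_mem hne (B.bddAbove_strand s))

theorem not_comm_of_term_eq_recv {n m : S.Node} {u : M} (hn : S.term n = some (false, u)) :
    ¬ B.comm n m := fun hc => by
  obtain ⟨-, -, v, hv, -⟩ := B.comm_mem _ _ hc
  simp [hn] at hv

end Bundle

namespace StepVia

variable {α : Type} {A : S.Strand → α} {f : S.Strand ≃ S.Strand} {B1 B2 : S.Bundle} {n m : S.Node}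

theorem strandHeight_le_of_not_isOld (h : StepVia A f B1 B2) (hn : n ∈ B2.nodes)
    (hnew : ¬ IsOld f B1 n) : B2.strandHeight n.1 ≤ n.2 := by
  obtain ⟨t, i⟩ := n
  obtain ⟨s, rfl⟩ := f.surjective t
  have hlt : B1.strandHeight s < i := by
    by_contra! hle
    exact hnew ⟨s, i, rfl, Bundle.mem_of_le_strandHeight (B2.nodes_valid _ hn).1 hle⟩
  have hle : i ≤ B2.strandHeight (f s) := Bundle.le_strandHeight hn
  have hne : B2.strandHeight (f s) ≠ B1.strandHeight s := by omega
  have hstep := (h.2.2 s s rfl hne hne).2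
  dsimp only
  omega

theorem isOld_of_comm (h : StepVia A f B1 B2) (hc : B2.comm n m) (hm : IsOld f B1 m) :
    IsOld f B1 n := by
  obtain ⟨s', j, rfl, hmem⟩ := hm
  obtain ⟨-, hm2, u, -, hu⟩ := B2.comm_mem _ _ hc
  have hu1 : S.term (s', j) = some (false, u) := (h.2.1.1 s' j hmem).2.trans hu
  obtain ⟨⟨s, i⟩, hp, -⟩ := B1.recv_unique _ hmem u hu1
  exact ⟨s, i, (B2.recv_unique _ hm2 u hu).unique hc (h.2.1.2 s i s' j hp),
    (B1.comm_mem _ _ hp).1⟩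

theorem comm_of_edge_of_not_isOld (h : StepVia A f B1 B2) (he : B2.edge n m)
    (hnew : ¬ IsOld f B1 n) : B2.comm n m := by
  rcases he with hc | ⟨⟨hfst, hsnd, -, -⟩, hn, hm⟩
  · exact hc
  · have htop := h.strandHeight_le_of_not_isOld hn hnew
    have hle : m.2 ≤ B2.strandHeight m.1 := Bundle.le_strandHeight hm
    rw [hfst, hsnd] at hle
    omega

theorem not_isOld_of_edge (h : StepVia A f B1 B2) (he : B2.edge n m)
    (hnew : ¬ IsOld f B1 n) : ¬ IsOld f B1 m :=
  fun hm => hnew (h.isOld_of_comm (h.comm_of_edge_of_not_isOld he hnew) hm)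

theorem not_edge_of_edge_of_not_isOld (h : StepVia A f B1 B2) {c : S.Node}
    (hnew : ¬ IsOld f B1 n) (he : B2.edge n m) : ¬ B2.edge m c := fun he' => by
  have hc := h.comm_of_edge_of_not_isOld he hnew
  obtain ⟨-, -, u, -, hu⟩ := B2.comm_mem _ _ hc
  exact Bundle.not_comm_of_term_eq_recv hu
    (h.comm_of_edge_of_not_isOld he' (h.not_isOld_of_edge he hnew))

end StepVia

end StrandPaper.StrandSpace

/-- If `B1 ⊑_f B2` with each agent extending at most one strand by at most
one node, then any causal path in `B2` contains at most two "new" nodes (nodes not of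
the form `⟨f(s),i⟩` for `⟨s,i⟩ ∈ B1`), and all new nodes occur after all old nodes. -/
theorem causal_path_new_nodes {M α : Type} {S : StrandSpace M} {A : S.Strand → α}
    (f : S.Strand ≃ S.Strand) (B1 B2 : S.Bundle) (h : StepVia A f B1 B2)
    (l : List S.Node) (hl : B2.CausalPath l) :
    ∃ l1 l2 : List S.Node, l = l1 ++ l2 ∧
      (∀ n ∈ l1, ∃ s i, n = (f s, i) ∧ (s, i) ∈ B1.nodes) ∧
      (∀ n ∈ l2, ¬ ∃ s i, n = (f s, i) ∧ (s, i) ∈ B1.nodes) ∧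
      l2.length ≤ 2 := by
  obtain ⟨l1, l2, rfl, hold, hnew, hchain⟩ :=
    List.IsChain.exists_eq_append_of_imp_not (p := IsOld f B1) hl.1
      fun _ _ => h.not_isOld_of_edge
  refine ⟨l1, l2, rfl, hold, hnew, hchain.length_le_two fun n hn _ _ => ?_⟩
  exact h.not_edge_of_edge_of_not_isOld (hnew n hn)
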